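/- Let n ≥ 1, q₀ ≥ 1 and M > 0. There exists a continuous non-decreasing function κ : [0,2] → [0,∞) with κ(0) = 0, depending only on n, q₀ and M, with the following property: for any two Borel probability measures m and μ on ℝ^{2n} satisfying ∫ ‖v‖^{2q₀} m(dv) ≤ M and ∫ ‖v‖^{2q₀} μ(dv) ≤ M, the pushforward measures I∘m and I∘μ on ℝ^n under the action map I (with I_k(v) = ½‖v_k‖²) satisfy ‖I∘m − I∘μ‖*_L ≤ κ( ‖m − μ‖*_L ), where ‖·‖*_L denotes the dual-Lipschitz distance on the corresponding space. -/

import Mathlib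

open MeasureTheory Real

noncomputable section

/-- `ℝ^{2n} = (ℝ²)ⁿ`, with Euclidean norm. -/
abbrev E2n (n : ℕ) := EuclideanSpace ℝ (Fin n × Fin 2)

/-- The action map `I : ℝ^{2n} → ℝⁿ`, with `I_k(v) = ½‖v_k‖²`. -/
noncomputable def actionMap (n : ℕ) (v : E2n n) : EuclideanSpace ℝ (Fin n) :=
  (EuclideanSpace.equiv (Fin n) ℝ).symm fun k => ((v (k, 0)) ^ 2 + (v (k, 1)) ^ 2) / 2

/-- The set of values `∫ f dμ − ∫ f dν` over bounded Lipschitz `f` with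
`Lip(f) + sup|f| ≤ 1`. -/
def dualLipSet {X : Type*} [MetricSpace X] [MeasurableSpace X]
    (μ ν : Measure X) : Set ℝ :=
  {r | ∃ f : X → ℝ, ∃ L C : ℝ, 0 ≤ L ∧ 0 ≤ C ∧ L + C ≤ 1 ∧
      (∀ x y, |f x - f y| ≤ L * dist x y) ∧ (∀ x, |f x| ≤ C) ∧
      r = (∫ x, f x ∂μ) - ∫ x, f x ∂ν}

/-- The dual-Lipschitz (Kantorovich–Rubinstein) distance between two measures. -/
noncomputable def dualLip {X : Type*} [MetricSpace X] [MeasurableSpace X]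
    (μ ν : Measure X) : ℝ :=
  sSup (dualLipSet μ ν)

/-!
Fix a test function `g` on `ℝⁿ` and a radius `R ≥ 1`. On the closed ball of radius `R` the
action map is `R`-Lipschitz, so `g ∘ I` restricted to that ball extends (McShane, then clamping
to `[-C, C]`) to a bounded Lipschitz function `F` on `ℝ^{2n}` with `Lip(F) + sup|F| ≤ R + 1`;
hence `F` separates `m` and `μ` by at most `(R + 1) d`, where `d = ‖m − μ‖*_L`. Off the ball,
`|g ∘ I - F| ≤ 2`, and Markov's inequality for the `2q₀`-th moment bounds the mass there by
`M / R²`. Thus `‖I∘m − I∘μ‖*_L ≤ (R + 1) d + 4M / R²` for every `R ≥ 1`, and `R = d^{-1/3}`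
gives `κ(t) = t + (1 + 4M) t^{2/3}`.
-/

open scoped NNReal

section DualLip

variable {X : Type*} [MetricSpace X] [MeasurableSpace X] {μ ν : Measure X}

lemma zero_mem_dualLipSet : (0 : ℝ) ∈ dualLipSet μ ν :=
  ⟨0, 0, 0, le_rfl, le_rfl, by norm_num, by simp, by simp, by simp⟩

lemma le_two_of_mem_dualLipSet [IsProbabilityMeasure μ] [IsProbabilityMeasure ν] {r : ℝ}
    (hr : r ∈ dualLipSet μ ν) : r ≤ 2 := by
  obtain ⟨f, L, C, hL, -, hLC, -, hf, rfl⟩ := hr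
  have hf1 (x : X) : ‖f x‖ ≤ 1 := (hf x).trans (by linarith)
  have hμ := norm_integral_le_of_norm_le_const (μ := μ) (ae_of_all _ hf1)
  have hν := norm_integral_le_of_norm_le_const (μ := ν) (ae_of_all _ hf1)
  simp only [probReal_univ, mul_one, Real.norm_eq_abs, abs_le] at hμ hν
  linarith

lemma bddAbove_dualLipSet [IsProbabilityMeasure μ] [IsProbabilityMeasure ν] :
    BddAbove (dualLipSet μ ν) :=
  ⟨2, fun _ => le_two_of_mem_dualLipSet⟩

lemma dualLip_nonneg [IsProbabilityMeasure μ] [IsProbabilityMeasure ν] : 0 ≤ dualLip μ ν :=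
  le_csSup bddAbove_dualLipSet zero_mem_dualLipSet

lemma dualLip_le_two [IsProbabilityMeasure μ] [IsProbabilityMeasure ν] : dualLip μ ν ≤ 2 :=
  csSup_le ⟨0, zero_mem_dualLipSet⟩ fun _ => le_two_of_mem_dualLipSet

lemma integral_sub_integral_le_mul_dualLip [IsProbabilityMeasure μ] [IsProbabilityMeasure ν]
    {f : X → ℝ} {L C : ℝ} (hL : 0 ≤ L) (hC : 0 ≤ C)
    (hf_lip : ∀ x y, |f x - f y| ≤ L * dist x y) (hf_bdd : ∀ x, |f x| ≤ C) :
    ∫ x, f x ∂μ - ∫ x, f x ∂ν ≤ (L + C) * dualLip μ ν := by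
  rcases (add_nonneg hL hC).eq_or_lt with h | h
  · have hf0 : f = 0 := funext fun x => abs_nonpos_iff.1 ((hf_bdd x).trans (by linarith))
    simp [hf0, ← h]
  · have hmem : ∫ x, f x / (L + C) ∂μ - ∫ x, f x / (L + C) ∂ν ∈ dualLipSet μ ν := by
      refine ⟨fun x => f x / (L + C), L / (L + C), C / (L + C), by positivity, by positivity,
        by rw [← add_div, div_self h.ne'], fun x y => ?_, fun x => ?_, rfl⟩
      · rw [← sub_div, abs_div, abs_of_pos h, div_mul_eq_mul_div]
        gcongr
        exact hf_lip x y
      · rw [abs_div, abs_of_pos h]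
        gcongr
        exact hf_bdd x
    have := le_csSup bddAbove_dualLipSet hmem
    rwa [integral_div, integral_div, ← sub_div, div_le_iff₀ h, mul_comm] at this

end DualLip

lemma LipschitzOnWith.exists_lipschitzWith_abs_le {α : Type*} [PseudoMetricSpace α]
    {f : α → ℝ} {s : Set α} {K : ℝ≥0} {C : ℝ} (hf : LipschitzOnWith K f s) (hC : 0 ≤ C)
    (hfC : ∀ x ∈ s, |f x| ≤ C) :
    ∃ g : α → ℝ, LipschitzWith K g ∧ (∀ x, |g x| ≤ C) ∧ Set.EqOn f g s := by
  obtain ⟨g, hg, hfg⟩ := hf.extend_real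
  refine ⟨fun x => max (-C) (min C (g x)), (hg.const_min C).const_max (-C), fun x => ?_,
    fun x hx => ?_⟩
  · exact abs_le.2 ⟨le_max_left _ _, max_le (by linarith) (min_le_left _ _)⟩
  · obtain ⟨h₁, h₂⟩ := abs_le.1 (hfC x hx)
    simp only [← hfg hx, min_eq_right h₂, max_eq_right h₁]

lemma abs_integral_sub_integral_le_of_eqOn {α : Type*} [MeasurableSpace α] {μ : Measure α}
    [IsFiniteMeasure μ] {f g : α → ℝ} {s : Set α} {C : ℝ} (hf : Integrable f μ)
    (hg : Integrable g μ) (hfC : ∀ x, |f x| ≤ C) (hgC : ∀ x, |g x| ≤ C)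
    (hfg : Set.EqOn f g s) :
    |∫ x, f x ∂μ - ∫ x, g x ∂μ| ≤ 2 * C * μ.real sᶜ := by
  rw [← integral_sub hf hg, ← setIntegral_eq_integral_of_forall_compl_eq_zero (s := sᶜ)
    (μ := μ) (f := fun x => f x - g x) fun x hx => sub_eq_zero.2 (hfg (not_not.1 hx))]
  have hbound (x : α) : ‖f x - g x‖ ≤ 2 * C :=
    (abs_sub _ _).trans (by linarith [hfC x, hgC x])
  exact norm_setIntegral_le_of_norm_le_const (measure_lt_top μ _) fun x _ => hbound x

lemma measureReal_compl_closedBall_le {E : Type*} [NormedAddCommGroup E] [MeasurableSpace E]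
    [OpensMeasurableSpace E] (μ : Measure E) {p R M : ℝ} (hp : 0 ≤ p) (hR : 0 < R)
    (hM : 0 ≤ M)
    (hμ : ∫⁻ v, ENNReal.ofReal (‖v‖ ^ p) ∂μ ≤ ENNReal.ofReal M) :
    μ.real (Metric.closedBall 0 R)ᶜ ≤ M / R ^ p := by
  have hmarkov : ENNReal.ofReal (R ^ p) * μ (Metric.closedBall 0 R)ᶜ ≤ ENNReal.ofReal M := by
    rw [← lintegral_indicator_const Metric.isClosed_closedBall.measurableSet.compl]
    refine (lintegral_mono fun v => Set.indicator_apply_le' (fun hv => ?_) fun _ => zero_le).trans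
      hμ
    have hv : R < ‖v‖ := by simpa using hv
    exact ENNReal.ofReal_le_ofReal (rpow_le_rpow hR.le hv.le hp)
  have := ENNReal.toReal_mono ENNReal.ofReal_ne_top hmarkov
  rw [ENNReal.toReal_mul, ENNReal.toReal_ofReal (by positivity), ENNReal.toReal_ofReal hM] at this
  rwa [le_div_iff₀ (rpow_pos_of_pos hR p), mul_comm]

theorem dualLip_map_le_of_lipschitzOnWith {X Y : Type*} [MetricSpace X] [MeasurableSpace X]
    [OpensMeasurableSpace X] [MetricSpace Y] [MeasurableSpace Y] [OpensMeasurableSpace Y]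
    {μ ν : Measure X} [IsProbabilityMeasure μ] [IsProbabilityMeasure ν] {Φ : X → Y}
    (hΦ : Measurable Φ) {K : ℝ≥0} {S : Set X} (hΦS : LipschitzOnWith K Φ S) :
    dualLip (μ.map Φ) (ν.map Φ) ≤
      (K + 1) * dualLip μ ν + 2 * (μ.real Sᶜ + ν.real Sᶜ) := by
  have := Measure.isProbabilityMeasure_map (μ := μ) hΦ.aemeasurable
  have := Measure.isProbabilityMeasure_map (μ := ν) hΦ.aemeasurable
  refine csSup_le ⟨0, zero_mem_dualLipSet⟩ ?_
  rintro _ ⟨g, L, C, hL, hC, hLC, hg_lip, hg_bdd, rfl⟩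
  have hg : LipschitzWith L.toNNReal g := LipschitzWith.of_dist_le_mul fun x y => by
    simpa [Real.dist_eq, hL] using hg_lip x y
  obtain ⟨F, hF_lip, hF_bdd, hgF⟩ :=
    (hg.comp_lipschitzOnWith hΦS).exists_lipschitzWith_abs_le hC fun x _ => hg_bdd (Φ x)
  have hF_test : ∫ x, F x ∂μ - ∫ x, F x ∂ν ≤ (L * K + C) * dualLip μ ν := by
    refine integral_sub_integral_le_mul_dualLip (by positivity) hC (fun x y => ?_) hF_bdd
    simpa [Real.dist_eq, hL] using hF_lip.dist_le_mul x y
  have htail (ρ : Measure X) [IsProbabilityMeasure ρ] :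
      |∫ x, g (Φ x) ∂ρ - ∫ x, F x ∂ρ| ≤ 2 * ρ.real Sᶜ := by
    have hgΦ : Integrable (g ∘ Φ) ρ := .of_bound
      (hg.continuous.measurable.comp hΦ).aestronglyMeasurable C (ae_of_all _ fun x => hg_bdd _)
    have hF : Integrable F ρ := .of_bound hF_lip.continuous.aestronglyMeasurable C
      (ae_of_all _ hF_bdd)
    refine (abs_integral_sub_integral_le_of_eqOn hgΦ hF (fun x => hg_bdd _) hF_bdd hgF).trans ?_
    gcongr
    linarith
  rw [integral_map hΦ.aemeasurable hg.continuous.aestronglyMeasurable,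
    integral_map hΦ.aemeasurable hg.continuous.aestronglyMeasurable]
  have hLK : L * K + C ≤ K + 1 := by nlinarith [K.2]
  have := mul_le_mul_of_nonneg_right hLK dualLip_nonneg (a := dualLip μ ν)
  linarith [abs_le.1 (htail μ), abs_le.1 (htail ν)]

section ActionMap

variable {n : ℕ}

lemma actionMap_apply (v : E2n n) (k : Fin n) :
    actionMap n v k = (v (k, 0) ^ 2 + v (k, 1) ^ 2) / 2 := rfl

lemma continuous_actionMap : Continuous (actionMap n) := by
  unfold actionMap
  fun_prop

lemma sq_add_sq_le_norm_sq (v : E2n n) (k : Fin n) :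
    v (k, 0) ^ 2 + v (k, 1) ^ 2 ≤ ‖v‖ ^ 2 := by
  rw [EuclideanSpace.real_norm_sq_eq, Fintype.sum_prod_type]
  simpa [Fin.sum_univ_two] using Finset.single_le_sum (f := fun k => ∑ i, v (k, i) ^ 2)
    (fun _ _ => by positivity) (Finset.mem_univ k)

lemma sq_half_sub_half_le {a b c d R : ℝ} (hab : a ^ 2 + b ^ 2 ≤ R ^ 2)
    (hcd : c ^ 2 + d ^ 2 ≤ R ^ 2) :
    ((a ^ 2 + b ^ 2) / 2 - (c ^ 2 + d ^ 2) / 2) ^ 2 ≤ R ^ 2 * ((a - c) ^ 2 + (b - d) ^ 2) := by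
  have hsum : (a + c) ^ 2 + (b + d) ^ 2 ≤ 4 * R ^ 2 := by
    nlinarith [sq_nonneg (a - c), sq_nonneg (b - d)]
  nlinarith [sq_nonneg ((a - c) * (b + d) - (b - d) * (a + c)),
    mul_le_mul_of_nonneg_left hsum (add_nonneg (sq_nonneg (a - c)) (sq_nonneg (b - d)))]

lemma lipschitzOnWith_actionMap (R : ℝ≥0) :
    LipschitzOnWith R (actionMap n) (Metric.closedBall 0 R) := by
  refine LipschitzOnWith.of_dist_le_mul fun v hv w hw => ?_
  rw [mem_closedBall_zero_iff] at hv hw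
  refine (pow_le_pow_iff_left₀ dist_nonneg (by positivity) two_ne_zero).1 ?_
  rw [mul_pow, dist_eq_norm, dist_eq_norm, EuclideanSpace.real_norm_sq_eq,
    EuclideanSpace.real_norm_sq_eq, Fintype.sum_prod_type, Finset.mul_sum]
  refine Finset.sum_le_sum fun k _ => ?_
  have hR2 (u : E2n n) (hu : ‖u‖ ≤ R) : u (k, 0) ^ 2 + u (k, 1) ^ 2 ≤ (R : ℝ) ^ 2 :=
    (sq_add_sq_le_norm_sq u k).trans (pow_le_pow_left₀ (norm_nonneg u) hu 2)
  simpa [actionMap_apply, Fin.sum_univ_two] using sq_half_sub_half_le (hR2 v hv) (hR2 w hw)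

end ActionMap

open Filter Topology in
lemma le_add_mul_rpow_of_forall_le {r d A : ℝ} (hd : 0 ≤ d) (hA : 0 ≤ A) (hr : r ≤ 2)
    (h : ∀ R ≥ 1, r ≤ (R + 1) * d + A / R ^ 2) : r ≤ d + (1 + A) * d ^ (2 / 3 : ℝ) := by
  rcases hd.eq_or_lt with rfl | hd₀
  · have hlim : Tendsto (fun R : ℝ => (R + 1) * 0 + A / R ^ 2) atTop (𝓝 0) := by
      simpa using tendsto_const_nhds.div_atTop (tendsto_pow_atTop two_ne_zero)
    simpa using ge_of_tendsto hlim ((eventually_ge_atTop 1).mono h)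
  rcases le_or_gt d 1 with hd₁ | hd₁
  · have hR : 1 ≤ d ^ (-(1 / 3) : ℝ) :=
      one_le_rpow_of_pos_of_le_one_of_nonpos hd₀ hd₁ (by norm_num)
    have hRd : d ^ (-(1 / 3) : ℝ) * d = d ^ (2 / 3 : ℝ) := by
      rw [← rpow_add_one hd₀.ne']
      norm_num
    have hAR : A / (d ^ (-(1 / 3) : ℝ)) ^ 2 = A * d ^ (2 / 3 : ℝ) := by
      rw [← rpow_natCast, ← rpow_mul hd, div_eq_mul_inv, ← rpow_neg hd]
      norm_num
    have := h _ hR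
    rw [add_mul, hRd, hAR] at this
    linarith
  · have : 1 ≤ d ^ (2 / 3 : ℝ) := one_le_rpow hd₁.le (by norm_num)
    nlinarith

theorem pushforward_actions_dualLip_modulus_general
    (n : ℕ) (q₀ : ℝ) (hq₀ : 1 ≤ q₀) (M : ℝ) (hM : 0 < M) :
    ∃ κ : ℝ → ℝ,
      ContinuousOn κ (Set.Icc 0 2) ∧ MonotoneOn κ (Set.Icc 0 2) ∧ κ 0 = 0 ∧
      (∀ x ∈ Set.Icc (0:ℝ) 2, 0 ≤ κ x) ∧
      ∀ m μ : Measure (E2n n), IsProbabilityMeasure m → IsProbabilityMeasure μ →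
        (∫⁻ v, ENNReal.ofReal (‖v‖ ^ (2 * q₀)) ∂m) ≤ ENNReal.ofReal M →
        (∫⁻ v, ENNReal.ofReal (‖v‖ ^ (2 * q₀)) ∂μ) ≤ ENNReal.ofReal M →
        dualLip (Measure.map (actionMap n) m) (Measure.map (actionMap n) μ)
          ≤ κ (dualLip m μ) := by
  refine ⟨fun t => t + (1 + 4 * M) * t ^ (2 / 3 : ℝ), ?_, ?_, by simp, ?_, ?_⟩
  · exact (continuous_id.add (continuous_const.mul (continuous_rpow_const (by norm_num))))
      |>.continuousOn
  · exact fun a ha b _ hab => add_le_add hab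
      (mul_le_mul_of_nonneg_left (rpow_le_rpow ha.1 hab (by norm_num)) (by linarith))
  · exact fun x hx => by have := hx.1; positivity
  intro m μ _ _ hm hμ
  have hI := continuous_actionMap (n := n) |>.measurable
  have := Measure.isProbabilityMeasure_map (μ := m) hI.aemeasurable
  have := Measure.isProbabilityMeasure_map (μ := μ) hI.aemeasurable
  refine le_add_mul_rpow_of_forall_le dualLip_nonneg (by positivity) dualLip_le_two fun R hR => ?_
  lift R to ℝ≥0 using zero_le_one.trans hR
  have htail (ρ : Measure (E2n n))
      (hρ : ∫⁻ v, ENNReal.ofReal (‖v‖ ^ (2 * q₀)) ∂ρ ≤ ENNReal.ofReal M) :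
      ρ.real (Metric.closedBall 0 R)ᶜ ≤ M / (R : ℝ) ^ 2 := by
    refine (measureReal_compl_closedBall_le ρ (by linarith) (by positivity) hM.le hρ).trans ?_
    rw [← rpow_natCast]
    gcongr
    push_cast
    linarith
  have := dualLip_map_le_of_lipschitzOnWith (μ := m) (ν := μ) hI (lipschitzOnWith_actionMap R)
  rw [mul_div_assoc]
  linarith [htail m hm, htail μ hμ]

/-- Given `n`, `q₀ ≥ 1` and `M > 0`, there is a continuous non-decreasing function
`κ : [0,2] → [0,∞)` with `κ(0) = 0` such that for any two Borel probability measures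
`m, μ` on `ℝ^{2n}` with `2q₀`-th moments bounded by `M`, the pushforwards under the
action map satisfy `‖I∘m − I∘μ‖*_L ≤ κ(‖m − μ‖*_L)`. -/
theorem pushforward_actions_dualLip_modulus
    (n : ℕ) (hn : 1 ≤ n) (q₀ : ℝ) (hq₀ : 1 ≤ q₀) (M : ℝ) (hM : 0 < M) :
    ∃ κ : ℝ → ℝ,
      ContinuousOn κ (Set.Icc 0 2) ∧ MonotoneOn κ (Set.Icc 0 2) ∧ κ 0 = 0 ∧
      (∀ x ∈ Set.Icc (0:ℝ) 2, 0 ≤ κ x) ∧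
      ∀ m μ : Measure (E2n n), IsProbabilityMeasure m → IsProbabilityMeasure μ →
        (∫⁻ v, ENNReal.ofReal (‖v‖ ^ (2 * q₀)) ∂m) ≤ ENNReal.ofReal M →
        (∫⁻ v, ENNReal.ofReal (‖v‖ ^ (2 * q₀)) ∂μ) ≤ ENNReal.ofReal M →
        dualLip (Measure.map (actionMap n) m) (Measure.map (actionMap n) μ)
          ≤ κ (dualLip m μ) :=
  pushforward_actions_dualLip_modulus_general n q₀ hq₀ M hM
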